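/- arXiv:1805.02428 — 4 statements merged into one kernel-verified Lean document; each statement's English description precedes it below -/
import Mathlib

section
/- The principal value integral ∫₀^∞ √t · (1/(t−λ) − 1/t) dt equals 0 for any λ > 0, where the principal value is taken with respect to the singularity at t = λ. -/
/-!
With `s = √t`, `r = √λ`, the integrand is `r / (t - λ) - r / (s (s + r))`, so it has the primitive
`F t = r (log |t - λ| - 2 log (√t + r))` on both sides of `λ`. Then `F 0 = 0` and `F → 0` at `∞`, so
the two integrals equal `F (λ - ε)` and `-F (λ + ε)`. The logarithmic singularity `r log |t - λ|`
is even about `λ` and cancels in `F (λ - ε) - F (λ + ε)`, which leaves the difference of the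
values at `λ ± ε` of a function continuous at `λ`; it tends to `0`.
-/

open MeasureTheory Filter Set Real Topology

theorem integral_Ioo_of_hasDerivAt_of_nonpos {f f' : ℝ → ℝ} {a b : ℝ} (hab : a ≤ b)
    (hcont : ContinuousOn f (Icc a b)) (hderiv : ∀ x ∈ Ioo a b, HasDerivAt f (f' x) x)
    (hf' : ∀ x ∈ Ioo a b, f' x ≤ 0) :
    ∫ x in Ioo a b, f' x = f b - f a := by
  have hint : IntegrableOn f' (Ioc a b) :=
    integrable_neg_iff.1 <| intervalIntegral.integrableOn_deriv_of_nonneg hcont.neg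
      (fun x hx => (hderiv x hx).neg) (fun x hx => neg_nonneg.2 (hf' x hx))
  rw [← integral_Ioc_eq_integral_Ioo, ← intervalIntegral.integral_of_le hab]
  exact intervalIntegral.integral_eq_sub_of_hasDerivAt_of_le hab hcont hderiv
    ((intervalIntegrable_iff_integrableOn_Ioc_of_le hab).2 hint)

theorem tendsto_sub_comp_add_sub_of_continuousAt {H : ℝ → ℝ} {a : ℝ} (hH : ContinuousAt H a) :
    Tendsto (fun ε => H (a + ε) - H (a - ε)) (𝓝 0) (𝓝 0) := by
  have hcont : ContinuousAt (fun ε => H (a + ε) - H (a - ε)) 0 :=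
    (hH.comp_of_eq (by fun_prop) (add_zero a)).sub (hH.comp_of_eq (by fun_prop) (sub_zero a))
  simpa using hcont.tendsto

/-- `log (t - lam)` is `log |t - lam|` by convention, so this is a primitive on both sides of `lam`. -/
noncomputable def pvPrimitive (lam t : ℝ) : ℝ :=
  √lam * (log (t - lam) - 2 * log (√t + √lam))

section pvPrimitive

variable {lam : ℝ}

theorem hasDerivAt_pvPrimitive (hlam : 0 < lam) {t : ℝ} (ht : 0 < t) (htl : t ≠ lam) :
    HasDerivAt (pvPrimitive lam) (√t * (1 / (t - lam) - 1 / t)) t := by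
  have hsum := ((hasDerivAt_sqrt ht.ne').add_const √lam).log (by positivity)
  have hdiff := ((hasDerivAt_id' t).sub_const lam).log (sub_ne_zero.2 htl)
  refine ((hdiff.sub (hsum.const_mul 2)).const_mul √lam).congr_deriv ?_
  obtain ⟨s, hs, rfl⟩ : ∃ s, 0 < s ∧ t = s ^ 2 := ⟨√t, by positivity, (sq_sqrt ht.le).symm⟩
  obtain ⟨r, hr, rfl⟩ : ∃ r, 0 < r ∧ lam = r ^ 2 := ⟨√lam, by positivity, (sq_sqrt hlam.le).symm⟩
  rw [sqrt_sq hs.le, sqrt_sq hr.le]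
  field_simp
  ring

theorem continuousAt_pvPrimitive (hlam : 0 < lam) {t : ℝ} (htl : t ≠ lam) :
    ContinuousAt (pvPrimitive lam) t := by
  have : √t + √lam ≠ 0 := by positivity
  unfold pvPrimitive
  fun_prop (disch := first | exact sub_ne_zero.2 htl | assumption)

theorem pvPrimitive_zero (hlam : 0 ≤ lam) : pvPrimitive lam 0 = 0 := by
  simp only [pvPrimitive, sqrt_zero, zero_sub, zero_add, log_neg_eq_log, log_sqrt hlam]
  ring

theorem tendsto_pvPrimitive_atTop : Tendsto (pvPrimitive lam) atTop (𝓝 0) := by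
  have hlin := tendsto_log_comp_add_sub_log (-lam)
  have hsqrt := (tendsto_log_comp_add_sub_log √lam).comp tendsto_sqrt_atTop
  have hlim := (hlin.sub (hsqrt.const_mul 2)).const_mul √lam
  rw [mul_zero, sub_zero, mul_zero] at hlim
  refine hlim.congr' ?_
  filter_upwards [eventually_ge_atTop 0] with t ht
  simp only [pvPrimitive, Function.comp_apply, log_sqrt ht]
  ring_nf

theorem pvPrimitive_sub_sub_pvPrimitive_add (lam ε : ℝ) :
    pvPrimitive lam (lam - ε) - pvPrimitive lam (lam + ε) =
      2 * √lam * log (√(lam + ε) + √lam) - 2 * √lam * log (√(lam - ε) + √lam) := by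
  simp only [pvPrimitive, sub_sub_cancel_left, add_sub_cancel_left, log_neg_eq_log]
  ring

theorem integral_Ioo_zero_eq_pvPrimitive {b : ℝ} (hb : 0 ≤ b) (hbl : b < lam) :
    ∫ t in Ioo 0 b, √t * (1 / (t - lam) - 1 / t) = pvPrimitive lam b := by
  have hlam : 0 < lam := hb.trans_lt hbl
  rw [integral_Ioo_of_hasDerivAt_of_nonpos (f := pvPrimitive lam) hb, pvPrimitive_zero hlam.le, sub_zero]
  · exact fun t ht => (continuousAt_pvPrimitive hlam (ht.2.trans_lt hbl).ne).continuousWithinAt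
  · exact fun t ht => hasDerivAt_pvPrimitive hlam ht.1 (ht.2.trans hbl).ne
  · intro t ht
    have hneg : 1 / (t - lam) < 0 := one_div_neg.2 (by linarith [ht.2])
    have hpos : 0 < 1 / t := one_div_pos.2 ht.1
    exact mul_nonpos_of_nonneg_of_nonpos (sqrt_nonneg t) (by linarith)

theorem integral_Ioi_eq_neg_pvPrimitive (hlam : 0 < lam) {a : ℝ} (ha : lam < a) :
    ∫ t in Ioi a, √t * (1 / (t - lam) - 1 / t) = -pvPrimitive lam a := by
  rw [integral_Ioi_of_hasDerivAt_of_nonneg' _ _ tendsto_pvPrimitive_atTop, zero_sub]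
  · exact fun t ht => hasDerivAt_pvPrimitive hlam (by linarith [mem_Ici.1 ht])
      (ha.trans_le ht).ne'
  · intro t ht
    have hdiff : 0 < t - lam := by linarith [mem_Ioi.1 ht]
    refine mul_nonneg (sqrt_nonneg t) (sub_nonneg.2 ?_)
    exact one_div_le_one_div_of_le hdiff (by linarith)

end pvPrimitive

/-- For λ > 0, the principal value integral
∫₀^∞ √t · (1/(t−λ) − 1/t) dt = 0, with the principal value taken with respect
to the singularity at t = λ. -/
theorem pv_integral_sqrt_eq_zero (lam : ℝ) (hlam : 0 < lam) :
    Tendsto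
      (fun ε : ℝ =>
        (∫ t in Set.Ioo (0:ℝ) (lam - ε), Real.sqrt t * (1 / (t - lam) - 1 / t)) +
        ∫ t in Set.Ioi (lam + ε), Real.sqrt t * (1 / (t - lam) - 1 / t))
      (nhdsWithin 0 (Set.Ioi 0)) (nhds 0) := by
  have hH : ContinuousAt (fun t => 2 * √lam * log (√t + √lam)) lam := by
    have : √lam + √lam ≠ 0 := by positivity
    fun_prop (disch := assumption)
  refine ((tendsto_sub_comp_add_sub_of_continuousAt hH).mono_left nhdsWithin_le_nhds).congr' ?_
  filter_upwards [Ioo_mem_nhdsGT hlam] with ε ⟨hε, hεl⟩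
  rw [integral_Ioo_zero_eq_pvPrimitive (by linarith) (by linarith),
    integral_Ioi_eq_neg_pvPrimitive hlam (by linarith), ← sub_eq_add_neg,
    pvPrimitive_sub_sub_pvPrimitive_add]
end

section
/- Let A, B > 0 and let f : [−1/2, 1/2] → ℝ be differentiable with 0 < f'(x) ≤ B for all x ∈ [−1/2, 1/2]. If the equation f(x) = A/x has roots x₁ ∈ [−1/2, 0) and x₂ ∈ (0, 1/2], then x₂ − x₁ ≥ c·√(A/B) for some absolute constant c > 0 (one may take c = 1). -/
open Set

/-- Let A, B > 0 and f : [−1/2,1/2] → ℝ differentiable with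
0 < f'(x) ≤ B on [−1/2,1/2]. If f(x) = A/x has roots x₁ ∈ [−1/2,0) and
x₂ ∈ (0,1/2], then x₂ − x₁ ≥ √(A/B) (constant c = 1). -/
theorem root_separation (A B : ℝ) (hA : 0 < A) (hB : 0 < B)
    (f f' : ℝ → ℝ)
    (hderiv : ∀ x ∈ Set.Icc (-(1/2) : ℝ) (1/2), HasDerivAt f (f' x) x)
    (hpos : ∀ x ∈ Set.Icc (-(1/2) : ℝ) (1/2), 0 < f' x)
    (hbd : ∀ x ∈ Set.Icc (-(1/2) : ℝ) (1/2), f' x ≤ B)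
    (x₁ x₂ : ℝ) (hx₁ : x₁ ∈ Set.Ico (-(1/2) : ℝ) 0) (hx₂ : x₂ ∈ Set.Ioc (0:ℝ) (1/2))
    (h₁ : f x₁ = A / x₁) (h₂ : f x₂ = A / x₂) :
    x₂ - x₁ ≥ Real.sqrt (A / B) := by
  obtain ⟨hx₁l, hx₁r⟩ := hx₁
  obtain ⟨hx₂l, hx₂r⟩ := hx₂
  have hlt : x₁ < x₂ := hx₁r.trans hx₂l
  have hsub : Set.Icc x₁ x₂ ⊆ Set.Icc (-(1/2) : ℝ) (1/2) :=
    Set.Icc_subset_Icc hx₁l hx₂r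
  -- MVT
  obtain ⟨c, hc, hceq⟩ := exists_hasDerivAt_eq_slope f f' hlt
    (fun x hx => (hderiv x (hsub hx)).continuousAt.continuousWithinAt)
    (fun x hx => hderiv x (hsub (Set.Ioo_subset_Icc_self hx)))
  have hcB : f' c ≤ B := hbd c (hsub (Set.Ioo_subset_Icc_self hc))
  have key : A ≤ B * ((-x₁) * x₂) := by
    have hne1 : x₁ ≠ 0 := ne_of_lt hx₁r
    have hne2 : x₂ ≠ 0 := ne_of_gt hx₂l
    have hdiff : f x₂ - f x₁ = A * (x₂ - x₁) / ((-x₁) * x₂) := by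
      rw [h₁, h₂]
      field_simp
      ring
    have hslope : A * (x₂ - x₁) / ((-x₁) * x₂) ≤ B * (x₂ - x₁) := by
      rw [← hdiff]
      calc f x₂ - f x₁ = f' c * (x₂ - x₁) := by
            rw [hceq, div_mul_cancel₀ _ (sub_ne_zero.mpr (ne_of_gt hlt))]
        _ ≤ B * (x₂ - x₁) := by nlinarith
    have hprod : 0 < (-x₁) * x₂ := mul_pos (by linarith) hx₂l
    rw [div_le_iff₀ hprod] at hslope
    nlinarith
  have hsq : A / B ≤ (x₂ - x₁) ^ 2 := by
    rw [div_le_iff₀ hB]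
    nlinarith [sq_nonneg (x₂ + x₁)]
  calc Real.sqrt (A / B) ≤ Real.sqrt ((x₂ - x₁) ^ 2) := Real.sqrt_le_sqrt hsq
    _ = x₂ - x₁ := by rw [Real.sqrt_sq (by linarith)]
end

section
/- For λ ≥ 2 and 0 < α ≤ 1/2, the principal value integral ∫_{−λ^α}^{λ^α} √(λ+s) · (1/s − 1/(λ+s)) ds is O(λ^{α−1/2}): there is an absolute constant K with |P.V. ∫_{−λ^α}^{λ^α} √(λ+s)(1/s − 1/(λ+s)) ds| ≤ K·λ^{α−1/2}. -/
/-! On `[-λ^α, λ^α]` the integrand equals `√λ / s + r(s)` with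
`r(s) = 1 / (√(λ + s) + √λ) - 1 / √(λ + s)`, obtained by rationalising `(√(λ + s) - √λ) / s`;
`r` has no singularity at `0`. The odd term `√λ / s` cancels in the principal value, which is
therefore `∫ r`. Since `λ^α ≤ √λ ≤ 3λ/4`, we have `λ + s ≥ λ/4` there, so `|r| ≤ 2/√λ`, and the
interval has length `2λ^α`. -/

open MeasureTheory Filter Set Topology

theorem integral_neg_add_integral_eq_zero_of_odd {h : ℝ → ℝ} (hodd : ∀ s, h (-s) = -h s)
    (u v : ℝ) : (∫ s in (-v)..(-u), h s) + ∫ s in u..v, h s = 0 := by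
  rw [← intervalIntegral.integral_comp_neg]
  simp only [hodd, intervalIntegral.integral_neg, neg_add_cancel]

theorem setIntegral_Ioo_eq_integral_add {f h g : ℝ → ℝ} {u v : ℝ} (huv : u ≤ v)
    (hh : IntervalIntegrable h volume u v) (hg : IntervalIntegrable g volume u v)
    (hf : ∀ s ∈ Icc u v, f s = h s + g s) :
    ∫ s in Ioo u v, f s = (∫ s in u..v, h s) + ∫ s in u..v, g s := by
  rw [← integral_Ioc_eq_integral_Ioo, ← intervalIntegral.integral_of_le huv,
    ← intervalIntegral.integral_add hh hg]
  exact intervalIntegral.integral_congr fun s hs => hf s (by rwa [uIcc_of_le huv] at hs)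

theorem tendsto_pv_integral_odd_add {f h g : ℝ → ℝ} {a : ℝ} (ha : 0 < a)
    (hodd : ∀ s, h (-s) = -h s) (hh : ContinuousOn h {0}ᶜ)
    (hg : IntervalIntegrable g volume (-a) a)
    (hf : ∀ s ∈ Icc (-a) a, s ≠ 0 → f s = h s + g s) :
    Tendsto (fun ε => (∫ s in Ioo (-a) (-ε), f s) + ∫ s in Ioo ε a, f s) (𝓝[>] 0)
      (𝓝 (∫ s in (-a)..a, g s)) := by
  have hIcc : uIcc (-a) a = Icc (-a) a := uIcc_of_le (by linarith)
  set F : ℝ → ℝ := fun x => ∫ t in (-a)..x, g t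
  have hF : ContinuousAt F 0 :=
    (intervalIntegral.continuousOn_primitive_interval' hg left_mem_uIcc).continuousAt
      (hIcc ▸ Icc_mem_nhds (by linarith) ha)
  have hlim : Tendsto (fun ε => F (-ε) + (F a - F ε)) (𝓝 0) (𝓝 (F a)) := by
    have hcont : ContinuousAt (fun ε => F (-ε) + (F a - F ε)) 0 :=
      (hF.comp_of_eq continuousAt_neg neg_zero).add (continuousAt_const.sub hF)
    simpa using hcont.tendsto
  refine (hlim.mono_left nhdsWithin_le_nhds).congr' ?_
  filter_upwards [Ioo_mem_nhdsGT ha] with ε ⟨hε, hεa⟩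
  have hhi : ∀ u v, 0 ∉ uIcc u v → IntervalIntegrable h volume u v := fun u v h0 =>
    (hh.mono fun s hs hs0 => h0 (hs0 ▸ hs)).intervalIntegrable
  have hgi : ∀ u ∈ Icc (-a) a, ∀ v ∈ Icc (-a) a, IntervalIntegrable g volume u v :=
    fun u hu v hv => hg.mono_set (hIcc ▸ uIcc_subset_Icc hu hv)
  have hleft := setIntegral_Ioo_eq_integral_add (f := f) (by linarith : -a ≤ -ε)
    (hhi _ _ (by rw [uIcc_of_le (by linarith)]; exact fun h0 => by linarith [h0.2]))
    (hgi _ ⟨le_rfl, by linarith⟩ _ ⟨by linarith, by linarith⟩)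
    fun s hs => hf s ⟨hs.1, by linarith [hs.2]⟩ (by linarith [hs.2])
  have hright := setIntegral_Ioo_eq_integral_add (f := f) hεa.le
    (hhi _ _ (by rw [uIcc_of_le hεa.le]; exact fun h0 => by linarith [h0.1]))
    (hgi _ ⟨by linarith, by linarith⟩ _ ⟨by linarith, le_rfl⟩)
    fun s hs => hf s ⟨by linarith [hs.1], hs.2⟩ (by linarith [hs.1])
  have hFsub : F a - F ε = ∫ s in ε..a, g s := intervalIntegral.integral_interval_sub_left
    (hgi _ ⟨le_rfl, by linarith⟩ _ ⟨by linarith, le_rfl⟩)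
    (hgi _ ⟨le_rfl, by linarith⟩ _ ⟨by linarith, by linarith⟩)
  rw [hleft, hright, ← hFsub]
  linear_combination -integral_neg_add_integral_eq_zero_of_odd hodd ε a

noncomputable def pvRemainder (lam s : ℝ) : ℝ := 1 / (√(lam + s) + √lam) - 1 / √(lam + s)

theorem sqrt_mul_sub_eq_div_add_pvRemainder {lam s : ℝ} (hlam : 0 < lam) (hs : 0 < lam + s)
    (hs0 : s ≠ 0) : √(lam + s) * (1 / s - 1 / (lam + s)) = √lam / s + pvRemainder lam s := by
  have hx : 0 < √(lam + s) := Real.sqrt_pos.mpr hs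
  have hy : 0 < √lam := Real.sqrt_pos.mpr hlam
  have hx2 : √(lam + s) ^ 2 = lam + s := Real.sq_sqrt hs.le
  have hy2 : √lam ^ 2 = lam := Real.sq_sqrt hlam.le
  have hrat : 1 / (√(lam + s) + √lam) = (√(lam + s) - √lam) / s := by
    rw [div_eq_div_iff (by positivity) hs0]
    linear_combination hy2 - hx2
  rw [pvRemainder, hrat]
  field_simp
  linear_combination (-s) * hx2

theorem abs_pvRemainder_le {lam s : ℝ} (hlam : 0 < lam) (hs : lam / 4 ≤ lam + s) :
    |pvRemainder lam s| ≤ 2 / √lam := by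
  have hy : 0 < √lam := Real.sqrt_pos.mpr hlam
  have hhalf : √lam / 2 ≤ √(lam + s) := by
    calc √lam / 2 = √(lam / 4) := by
          rw [Real.sqrt_div' _ (by norm_num : (0:ℝ) ≤ 4), show (4:ℝ) = 2 ^ 2 by norm_num,
            Real.sqrt_sq (by norm_num)]
      _ ≤ √(lam + s) := Real.sqrt_le_sqrt hs
  have hx : 0 < √(lam + s) := by linarith
  have hle : 1 / (√(lam + s) + √lam) ≤ 1 / √(lam + s) :=
    one_div_le_one_div_of_le hx (by linarith)
  have hinv : 1 / √(lam + s) ≤ 2 / √lam := by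
    rw [div_le_div_iff₀ hx hy]
    linarith
  rw [pvRemainder, abs_sub_comm, abs_of_nonneg (by linarith)]
  linarith [one_div_pos.mpr (add_pos hx hy)]

theorem continuousOn_pvRemainder {lam : ℝ} (hlam : 0 < lam) :
    ContinuousOn (pvRemainder lam) (Ioi (-lam)) := by
  have hsqrt : Continuous fun s => √(lam + s) := by fun_prop
  have hpos : ∀ s ∈ Ioi (-lam), 0 < √(lam + s) := fun s hs =>
    Real.sqrt_pos.mpr (by linarith [mem_Ioi.mp hs])
  refine ContinuousOn.sub ?_ ?_
  · exact continuousOn_const.div (hsqrt.add continuous_const).continuousOn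
      fun s hs => (add_pos (hpos s hs) (Real.sqrt_pos.mpr hlam)).ne'
  · exact continuousOn_const.div hsqrt.continuousOn fun s hs => (hpos s hs).ne'

theorem div_four_le_add_of_neg_sqrt_le {lam s : ℝ} (hlam : 2 ≤ lam) (hs : -√lam ≤ s) :
    lam / 4 ≤ lam + s := by
  have : √lam ≤ 3 / 4 * lam := (Real.sqrt_le_left (by linarith)).mpr (by nlinarith)
  linarith

theorem rpow_le_sqrt {x α : ℝ} (hx : 1 ≤ x) (hα : α ≤ 1 / 2) : x ^ α ≤ √x := by
  rw [Real.sqrt_eq_rpow]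
  exact Real.rpow_le_rpow_of_exponent_le hx hα

/-- for λ ≥ 2 and 0 < α ≤ 1/2, the principal value integral
P.V. ∫_{−λ^α}^{λ^α} √(λ+s)·(1/s − 1/(λ+s)) ds (with respect to the singularity
at s = 0) exists and is ≤ K·λ^{α−1/2} in absolute value, for an absolute
constant K. -/
theorem pv_middle_interval_bound :
    ∃ K : ℝ, 0 < K ∧ ∀ lam α : ℝ, 2 ≤ lam → 0 < α → α ≤ 1 / 2 →
      ∃ L : ℝ,
        Tendsto
          (fun ε : ℝ =>
            (∫ s in Set.Ioo (-(lam ^ α)) (-ε),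
                Real.sqrt (lam + s) * (1 / s - 1 / (lam + s))) +
            ∫ s in Set.Ioo ε (lam ^ α),
                Real.sqrt (lam + s) * (1 / s - 1 / (lam + s)))
          (nhdsWithin 0 (Set.Ioi 0)) (nhds L) ∧
        |L| ≤ K * lam ^ (α - 1 / 2) := by
  refine ⟨4, by norm_num, fun lam α hlam _ hα => ?_⟩
  have hlam0 : 0 < lam := by linarith
  set a := lam ^ α
  have ha : 0 < a := Real.rpow_pos_of_pos hlam0 α
  have hlarge : ∀ s ∈ Icc (-a) a, lam / 4 ≤ lam + s := fun s hs =>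
    div_four_le_add_of_neg_sqrt_le hlam
      (by linarith [hs.1, rpow_le_sqrt (x := lam) (by linarith) hα])
  have hcont : ContinuousOn (pvRemainder lam) (uIcc (-a) a) :=
    (continuousOn_pvRemainder hlam0).mono fun s hs => by
      rw [uIcc_of_le (by linarith)] at hs
      exact mem_Ioi.mpr (by linarith [hlarge s hs])
  refine ⟨∫ s in (-a)..a, pvRemainder lam s,
    tendsto_pv_integral_odd_add ha (h := fun s => √lam / s) (fun s => div_neg _)
      (continuousOn_const.div continuousOn_id fun _ hs => hs) hcont.intervalIntegrable
      fun s hs hs0 => sqrt_mul_sub_eq_div_add_pvRemainder hlam0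
        (by linarith [hlarge s hs]) hs0, ?_⟩
  have hbound : ∀ s ∈ uIoc (-a) a, ‖pvRemainder lam s‖ ≤ 2 / √lam := fun s hs =>
    abs_pvRemainder_le hlam0
      (hlarge s (Ioc_subset_Icc_self (by rwa [uIoc_of_le (by linarith)] at hs)))
  calc |∫ s in (-a)..a, pvRemainder lam s| ≤ 2 / √lam * |a - -a| :=
        intervalIntegral.norm_integral_le_of_norm_le_const hbound
    _ = 4 * (a / √lam) := by rw [abs_of_pos (by linarith)]; ring
    _ = 4 * lam ^ (α - 1 / 2) := by rw [Real.sqrt_eq_rpow, ← Real.rpow_sub hlam0]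
end

section
/- Let f : (λ−1/2, λ) ∪ (λ, λ+1/2) → ℝ be defined by f(t) = A/(λ−t) + g(t) where A > 0 and g is differentiable with 0 < g'(t) ≤ B on the whole interval (λ−1/2, λ+1/2). If f(t₁) = f(t₂) = c for some t₁ ∈ (λ−1/2, λ) and t₂ ∈ (λ, λ+1/2) and constant c, then t₂ − t₁ ≥ κ·√(A/B) for an absolute constant κ > 0. -/
open Set

/-- repulsion lemma: there is an absolute constant κ > 0 such
that if f(t) = A/(λ−t) + g(t) with A > 0, g differentiable on (λ−1/2, λ+1/2)
with 0 < g' ≤ B, and f(t₁) = f(t₂) = c for t₁ ∈ (λ−1/2, λ), t₂ ∈ (λ, λ+1/2),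
then t₂ − t₁ ≥ κ·√(A/B). -/
theorem spectral_repulsion :
    ∃ κ : ℝ, 0 < κ ∧
      ∀ (lam A B c t₁ t₂ : ℝ) (g g' : ℝ → ℝ),
        0 < A → 0 < B →
        (∀ t ∈ Set.Ioo (lam - 1 / 2) (lam + 1 / 2),
          HasDerivAt g (g' t) t ∧ 0 < g' t ∧ g' t ≤ B) →
        t₁ ∈ Set.Ioo (lam - 1 / 2) lam → t₂ ∈ Set.Ioo lam (lam + 1 / 2) →
        A / (lam - t₁) + g t₁ = c → A / (lam - t₂) + g t₂ = c →
        t₂ - t₁ ≥ κ * Real.sqrt (A / B) := by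
  refine ⟨1, one_pos, ?_⟩
  intro lam A B c t₁ t₂ g g' hA hB hg ht₁ ht₂ he₁ he₂
  obtain ⟨h1a, h1b⟩ := ht₁
  obtain ⟨h2a, h2b⟩ := ht₂
  have hd : 0 < t₂ - t₁ := by linarith
  have hsub : Set.Icc t₁ t₂ ⊆ Set.Ioo (lam - 1 / 2) (lam + 1 / 2) := by
    intro x hx
    exact ⟨by linarith [hx.1], by linarith [hx.2]⟩
  -- MVT bound: g t₂ - g t₁ ≤ B * (t₂ - t₁)
  have hmvt : ‖g t₂ - g t₁‖ ≤ B * ‖t₂ - t₁‖ :=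
    (convex_Icc t₁ t₂).norm_image_sub_le_of_norm_hasDerivWithin_le
      (fun x hx => ((hg x (hsub hx)).1).hasDerivWithinAt)
      (fun x hx => by
        have h := hg x (hsub hx)
        rw [Real.norm_eq_abs, abs_of_pos h.2.1]
        exact h.2.2)
      (Set.left_mem_Icc.mpr (by linarith)) (Set.right_mem_Icc.mpr (by linarith))
  have hmvt' : g t₂ - g t₁ ≤ B * (t₂ - t₁) := by
    have := (le_abs_self (g t₂ - g t₁)).trans hmvt
    rwa [Real.norm_eq_abs, abs_of_pos hd] at this
  have hp1 : 0 < lam - t₁ := by linarith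
  have hp2 : 0 < t₂ - lam := by linarith
  have hkey : g t₂ - g t₁ = A / (lam - t₁) + A / (t₂ - lam) := by
    have : A / (lam - t₂) = -(A / (t₂ - lam)) := by
      rw [← div_neg]; ring_nf
    have h := he₁.trans he₂.symm
    rw [this] at h
    linarith
  have hb1 : A / (t₂ - t₁) ≤ A / (lam - t₁) :=
    div_le_div_of_nonneg_left hA.le hp1 (by linarith)
  have hb2 : A / (t₂ - t₁) ≤ A / (t₂ - lam) :=
    div_le_div_of_nonneg_left hA.le hp2 (by linarith)
  have hAB : A / B ≤ (t₂ - t₁) ^ 2 := by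
    have h2 : 2 * (A / (t₂ - t₁)) ≤ B * (t₂ - t₁) := by linarith [hkey, hmvt']
    rw [div_le_iff₀ hB]
    have := (div_le_iff₀ hd).mp (by linarith : A / (t₂ - t₁) ≤ B * (t₂ - t₁) / 2 * 1)
    nlinarith [div_mul_cancel₀ A hd.ne']
  calc 1 * Real.sqrt (A / B) = Real.sqrt (A / B) := one_mul _
    _ ≤ Real.sqrt ((t₂ - t₁) ^ 2) := Real.sqrt_le_sqrt hAB
    _ = t₂ - t₁ := by rw [Real.sqrt_sq hd.le]
end
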